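/- arXiv:2201.10629 — 4 statements merged into one kernel-verified Lean document; each statement's English description precedes it below -/
import Mathlib

section
/- Let O be a complete discrete valuation ring with uniformizer ϖ and fraction field K, and let M be a cofinitely generated O-module, i.e. M ≅ (K⧸O)^d ⊕ T as O-modules with d ≥ 0 and T finite. Let f : M → M be an O-linear endomorphism whose kernel is finite. Then the cokernel M⧸f(M) is finite, of cardinality at most the cardinality of T. -/
/-!
Put `V = (K⧸O)^d`. Since `T` is killed by a power of `ϖ` and `V` is `ϖ`-divisible, `f` maps
`V` into itself, and its restriction `h` to `V` has finite kernel. Both `V` and `h(V)` are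
divisible, so their `ϖ^n`-torsion has `a^n` resp. `s^n` elements, where `a = |V[ϖ]|` and
`s = |h(V)[ϖ]|`; as `a^n ≤ |ker h| s^n` for all `n`, we get `a = s`. Hence `h(V) ⊇ V[ϖ]`,
and by divisibility `h(V) ⊇ V[ϖ^n]` for every `n`, i.e. `h` is onto. So `f(M) ⊇ V` and the
cokernel of `f` is a quotient of `M⧸V ≅ T`.
-/

open Submodule LinearMap

theorem Nat.le_of_forall_pow_le_mul_pow {a s c : ℕ} (h : ∀ n, a ^ n ≤ c * s ^ n) : a ≤ s := by
  rcases Nat.eq_zero_or_pos s with rfl | hs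
  · simpa using h 1
  by_contra! hsa
  have hlt : (1 : ℝ) < a / s := by
    rw [one_lt_div (by exact_mod_cast hs)]
    exact_mod_cast hsa
  obtain ⟨n, hn⟩ := pow_unbounded_of_one_lt (c : ℝ) hlt
  rw [div_pow, lt_div_iff₀ (by positivity)] at hn
  exact (h n).not_gt (by exact_mod_cast hn)

theorem LinearMap.card_le_card_ker_mul_card {R M N : Type*} [Ring R] [AddCommGroup M]
    [Module R M] [AddCommGroup N] [Module R N] (f : M →ₗ[R] N) {p : Submodule R M}
    {q : Submodule R N} (hf : ∀ x ∈ p, f x ∈ q) [Finite q] [Finite (ker f)] :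
    Nat.card p ≤ Nat.card (ker f) * Nat.card q := by
  rw [(ker (f.restrict hf)).card_eq_card_quotient_mul_card,
    Nat.card_congr (f.restrict hf).quotKerEquivRange.toEquiv]
  gcongr
  · rw [ker_restrict]
    exact Nat.card_le_card_of_injective (fun x => (⟨x.1.1, x.2⟩ : ker f))
      fun x y hxy => Subtype.ext (Subtype.ext (congrArg Subtype.val hxy :))
  · exact Nat.card_le_card_of_injective _ Subtype.val_injective

theorem exists_pow_smul_eq_zero_of_finite {R T : Type*} [CommRing R] [IsLocalRing R]
    [AddCommGroup T] [Module R T] [Finite T] {ϖ : R} (hϖ : ¬IsUnit ϖ) :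
    ∃ n : ℕ, ∀ t : T, ϖ ^ n • t = 0 := by
  -- `T → T` is finite, so `ϖ ^ a` and `ϖ ^ (a + k + 1)` act alike; and `1 - ϖ ^ (k + 1)` is a unit.
  obtain ⟨a, b, hab, heq⟩ := Set.Finite.exists_lt_map_eq_of_forall_mem
    (f := fun n : ℕ => fun t : T => ϖ ^ n • t) (fun _ => Set.mem_univ _) Set.finite_univ
  obtain ⟨k, rfl⟩ := Nat.exists_eq_add_of_lt hab
  have hu : IsUnit (1 - ϖ ^ (k + 1)) := IsLocalRing.isUnit_one_sub_self_of_mem_nonunits _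
    fun hu => hϖ ((isUnit_pow_iff k.succ_ne_zero).1 hu)
  refine ⟨a, fun t => ?_⟩
  rw [← hu.smul_eq_zero, sub_smul, one_smul, smul_smul, ← pow_add, add_comm, ← add_assoc]
  exact sub_eq_zero.2 (congrFun heq t)

section Divisible

variable {R V : Type*} [CommRing R] [AddCommGroup V] [Module R V] {ϖ : R}

theorem Submodule.card_torsionBy_pow_of_forall_exists_smul_eq
    (hdiv : ∀ v : V, ∃ w, ϖ • w = v) (n : ℕ) :
    Nat.card (torsionBy R V (ϖ ^ n)) = Nat.card (torsionBy R V ϖ) ^ n := by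
  induction n with
  | zero => simp [torsionBy_one]
  | succ n ih =>
    let ψ : torsionBy R V (ϖ ^ (n + 1)) →ₗ[R] torsionBy R V (ϖ ^ n) :=
      (DistribSMul.toLinearMap R V ϖ).restrict fun x hx => by
        rwa [mem_torsionBy_iff, DistribSMul.toLinearMap_apply, smul_smul, ← pow_succ]
    have hψ : Function.Surjective ψ := by
      rintro ⟨x, hx⟩
      obtain ⟨w, rfl⟩ := hdiv x
      exact ⟨⟨w, by rwa [mem_torsionBy_iff, pow_succ, mul_smul]⟩, rfl⟩
    have hker : ker ψ ≃ₗ[R] torsionBy R V ϖ := by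
      rw [ker_restrict]
      exact comapSubtypeEquivOfLe
        (torsionBy_le_torsionBy_of_dvd _ _ (dvd_pow_self ϖ n.succ_ne_zero))
    rw [(ker ψ).card_eq_card_quotient_mul_card, Nat.card_congr hker.toEquiv,
      Nat.card_congr (ψ.quotKerEquivOfSurjective hψ).toEquiv, ih, pow_succ, mul_comm]

theorem Submodule.torsionBy_pow_le_of_torsionBy_le {S : Submodule R V}
    (hS : ∀ s : S, ∃ t : S, ϖ • t = s) (h1 : torsionBy R V ϖ ≤ S) (n : ℕ) :
    torsionBy R V (ϖ ^ n) ≤ S := by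
  induction n with
  | zero => simp [torsionBy_one]
  | succ n ih =>
    intro v hv
    rw [mem_torsionBy_iff, pow_succ, mul_smul] at hv
    obtain ⟨t, ht⟩ := hS ⟨ϖ • v, ih hv⟩
    have hvt : v - t ∈ S :=
      h1 (by rw [mem_torsionBy_iff, smul_sub, ← Submodule.coe_smul, ht, sub_self])
    simpa using add_mem hvt t.2

theorem LinearMap.surjective_of_finite_ker (hdiv : ∀ v : V, ∃ w, ϖ • w = v)
    (htors : ∀ v : V, ∃ n : ℕ, ϖ ^ n • v = 0) [Finite (torsionBy R V ϖ)]
    (h : V →ₗ[R] V) [Finite (ker h)] : Function.Surjective h := by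
  have hSdiv : ∀ s : range h, ∃ t, ϖ • t = s := by
    rintro ⟨_, v, rfl⟩
    obtain ⟨w, rfl⟩ := hdiv v
    exact ⟨⟨h w, w, rfl⟩, Subtype.ext (map_smul h ϖ w).symm⟩
  let ι : torsionBy R (range h) ϖ → torsionBy R V ϖ := fun x =>
    ⟨x.1.1, congrArg Subtype.val ((mem_torsionBy_iff _ _).1 x.2)⟩
  have hι : Function.Injective ι := fun x y hxy =>
    Subtype.ext (Subtype.ext (congrArg Subtype.val hxy :))
  have : Finite (torsionBy R (range h) ϖ) := Finite.of_injective ι hι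
  have (n : ℕ) : Finite (torsionBy R (range h) (ϖ ^ n)) := by
    refine Nat.finite_of_card_ne_zero ?_
    rw [card_torsionBy_pow_of_forall_exists_smul_eq hSdiv]
    exact pow_ne_zero _ Nat.card_pos.ne'
  have : Finite (ker h.rangeRestrict) := by rwa [ker_rangeRestrict]
  have hcard : Nat.card (torsionBy R V ϖ) ≤ Nat.card (torsionBy R (range h) ϖ) :=
    Nat.le_of_forall_pow_le_mul_pow (c := Nat.card (ker h)) fun n => by
      rw [← card_torsionBy_pow_of_forall_exists_smul_eq hdiv,
        ← card_torsionBy_pow_of_forall_exists_smul_eq hSdiv, ← ker_rangeRestrict h]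
      exact h.rangeRestrict.card_le_card_ker_mul_card fun x hx => by
        rw [mem_torsionBy_iff] at hx ⊢
        rw [← map_smul, hx, map_zero]
  have hι_surj : Function.Surjective ι := (hι.bijective_of_nat_card_le hcard).2
  have h1 : torsionBy R V ϖ ≤ range h := fun v hv => by
    obtain ⟨x, hx⟩ := hι_surj ⟨v, hv⟩
    have hxv : (x.1 : V) = v := congrArg Subtype.val hx
    exact hxv ▸ x.1.2
  intro v
  obtain ⟨n, hn⟩ := htors v
  exact torsionBy_pow_le_of_torsionBy_le hSdiv h1 n hn

theorem LinearMap.eq_zero_of_forall_exists_smul_eq {T : Type*} [AddCommGroup T] [Module R T]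
    (hdiv : ∀ v : V, ∃ w, ϖ • w = v) {n : ℕ} (hT : ∀ t : T, ϖ ^ n • t = 0)
    (φ : V →ₗ[R] T) : φ = 0 := by
  have hpow (k : ℕ) (v : V) : ∃ w, ϖ ^ k • w = v := by
    induction k generalizing v with
    | zero => exact ⟨v, by rw [pow_zero, one_smul]⟩
    | succ k ih =>
      obtain ⟨w, rfl⟩ := ih v
      obtain ⟨u, rfl⟩ := hdiv w
      exact ⟨u, by rw [pow_succ, mul_smul]⟩
  ext v
  obtain ⟨w, rfl⟩ := hpow n v
  rw [map_smul, hT, zero_apply]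

theorem finite_quotient_range_and_card_le {T M : Type*} [AddCommGroup T] [Module R T]
    [AddCommGroup M] [Module R M] (hdiv : ∀ v : V, ∃ w, ϖ • w = v)
    (htors : ∀ v : V, ∃ n : ℕ, ϖ ^ n • v = 0) [Finite (torsionBy R V ϖ)] [Finite T] {n : ℕ}
    (hT : ∀ t : T, ϖ ^ n • t = 0) (e : M ≃ₗ[R] V × T) (f : M →ₗ[R] M) [Finite (ker f)] :
    Finite (M ⧸ range f) ∧ Nat.card (M ⧸ range f) ≤ Nat.card T := by
  let ι : V →ₗ[R] M := e.symm ∘ₗ inl R V T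
  let h : V →ₗ[R] V := fst R V T ∘ₗ e ∘ₗ f ∘ₗ ι
  have hsnd : snd R V T ∘ₗ e ∘ₗ f ∘ₗ ι = 0 := eq_zero_of_forall_exists_smul_eq hdiv hT _
  have hfι (v : V) : f (ι v) = ι (h v) := by
    apply e.injective
    ext
    · simp [ι, h]
    · simpa [ι] using congrArg (· v) hsnd
  have : Finite (ker h) :=
    Finite.of_injective (β := ker f) (fun v => ⟨ι v, by simp [hfι]⟩) fun v w hvw =>
      Subtype.ext (e.symm.injective.comp inl_injective (congrArg Subtype.val hvw :))
  have hh := h.surjective_of_finite_ker hdiv htors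
  let π : T → M ⧸ range f := fun t => Submodule.Quotient.mk (e.symm (0, t))
  have hπ : Function.Surjective π := by
    intro x
    obtain ⟨m, rfl⟩ := Submodule.Quotient.mk_surjective _ x
    obtain ⟨w, hw⟩ := hh (e m).1
    refine ⟨(e m).2, (Submodule.Quotient.eq _).2 ⟨-ι w, ?_⟩⟩
    rw [map_neg, hfι, hw]
    apply e.injective
    ext <;> simp [ι]
  exact ⟨Finite.of_surjective π hπ, Nat.card_le_card_of_surjective π hπ⟩

end Divisible

namespace Pi

variable {R ι V : Type*} [CommRing R] [AddCommGroup V] [Module R V] {ϖ : R}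

theorem exists_smul_eq (hdiv : ∀ v : V, ∃ w, ϖ • w = v) (v : ι → V) : ∃ w, ϖ • w = v := by
  choose w hw using fun i => hdiv (v i)
  exact ⟨w, funext hw⟩

theorem exists_pow_smul_eq_zero [Finite ι] (htors : ∀ v : V, ∃ n : ℕ, ϖ ^ n • v = 0)
    (v : ι → V) : ∃ n : ℕ, ϖ ^ n • v = 0 := by
  choose n hn using fun i => htors (v i)
  obtain ⟨N, hN⟩ := (Set.finite_range n).bddAbove
  exact ⟨N, funext fun i =>
    torsionBy_le_torsionBy_of_dvd _ _ (pow_dvd_pow ϖ (hN ⟨i, rfl⟩)) (hn i)⟩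

theorem finite_torsionBy [Finite ι] [Finite (torsionBy R V ϖ)] :
    Finite (torsionBy R (ι → V) ϖ) :=
  Finite.of_injective (β := ι → torsionBy R V ϖ)
    (fun v i => ⟨v.1 i, congrFun ((mem_torsionBy_iff _ _).1 v.2) i⟩)
    fun _ _ hvw => Subtype.ext (funext fun i => congrArg Subtype.val (congrFun hvw i))

end Pi

namespace IsFractionRing

variable {O K : Type*} [CommRing O] [Field K] [Algebra O K] [IsFractionRing O K] {ϖ : O}

local notation "Q" => K ⧸ LinearMap.range (Algebra.linearMap O K)

theorem exists_smul_eq_quotient_range (hϖ : ϖ ≠ 0) (x : Q) : ∃ y : Q, ϖ • y = x := by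
  obtain ⟨k, rfl⟩ := Submodule.Quotient.mk_surjective _ x
  refine ⟨Submodule.Quotient.mk ((algebraMap O K ϖ)⁻¹ * k), ?_⟩
  rw [← Submodule.Quotient.mk_smul, Algebra.smul_def, ← mul_assoc,
    mul_inv_cancel₀ ((map_ne_zero_iff _ (IsFractionRing.injective O K)).2 hϖ), one_mul]

theorem exists_pow_smul_eq_zero_quotient_range [IsDomain O] [IsDiscreteValuationRing O]
    (hϖ : Irreducible ϖ) (x : Q) : ∃ n : ℕ, ϖ ^ n • x = 0 := by
  obtain ⟨k, rfl⟩ := Submodule.Quotient.mk_surjective _ x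
  obtain ⟨a, b, hb, rfl⟩ := IsFractionRing.div_surjective (A := O) k
  obtain ⟨n, u, rfl⟩ :=
    IsDiscreteValuationRing.eq_unit_mul_pow_irreducible (nonZeroDivisors.ne_zero hb) hϖ
  refine ⟨n, ?_⟩
  rw [← Submodule.Quotient.mk_smul, Submodule.Quotient.mk_eq_zero]
  refine ⟨((u⁻¹ : Oˣ) : O) * a, ?_⟩
  have hu : algebraMap O K u ≠ 0 := (map_ne_zero_iff _ (IsFractionRing.injective O K)).2 u.ne_zero
  have hϖ' : algebraMap O K ϖ ≠ 0 :=
    (map_ne_zero_iff _ (IsFractionRing.injective O K)).2 hϖ.ne_zero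
  simp only [Algebra.linearMap_apply, Algebra.smul_def, map_mul, map_pow, map_units_inv]
  field_simp

/-- `Q[ϖ]` is the image of `O ⧸ (ϖ)` under `a ↦ a / ϖ`. -/
theorem finite_torsionBy_quotient_range [Finite (O ⧸ Ideal.span {ϖ})] (hϖ : ϖ ≠ 0) :
    Finite (torsionBy O Q ϖ) := by
  have hϖ' : algebraMap O K ϖ ≠ 0 := (map_ne_zero_iff _ (IsFractionRing.injective O K)).2 hϖ
  let ρ : O →ₗ[O] Q :=
    (range (Algebra.linearMap O K)).mkQ ∘ₗ toSpanSingleton O K (algebraMap O K ϖ)⁻¹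
  have hρ : Ideal.span {ϖ} ≤ ker ρ := by
    rw [Ideal.span_le, Set.singleton_subset_iff, SetLike.mem_coe, mem_ker]
    refine (Submodule.Quotient.mk_eq_zero _).2 ⟨1, ?_⟩
    simp [Algebra.smul_def, hϖ']
  have hsub : (torsionBy O Q ϖ : Set Q) ⊆ Set.range ((Ideal.span {ϖ}).liftQ ρ hρ) := by
    intro x hx
    obtain ⟨k, rfl⟩ := Submodule.Quotient.mk_surjective _ x
    obtain ⟨a, ha⟩ := (Submodule.Quotient.mk_eq_zero _).1 ((mem_torsionBy_iff _ _).1 hx)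
    refine ⟨Submodule.Quotient.mk a, (Submodule.Quotient.eq _).2 ⟨0, ?_⟩⟩
    change algebraMap O K a = ϖ • k at ha
    rw [Algebra.smul_def] at ha
    simp [Algebra.smul_def, ha, hϖ', mul_comm _ k]
  exact ((Set.finite_range _).subset hsub).to_subtype

end IsFractionRing

theorem stmt_2_general (O : Type*) [CommRing O] [IsDomain O] [IsDiscreteValuationRing O]
    [Finite (IsLocalRing.ResidueField O)]
    (ϖ : O) (hϖ : Irreducible ϖ)
    (K : Type*) [Field K] [Algebra O K] [IsFractionRing O K]
    (M : Type*) [AddCommGroup M] [Module O M]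
    (d : ℕ) (T : Type*) [AddCommGroup T] [Module O T] [Finite T]
    (iso : M ≃ₗ[O] (Fin d → K ⧸ LinearMap.range (Algebra.linearMap O K)) × T)
    (f : M →ₗ[O] M) (hker : Finite (LinearMap.ker f)) :
    Finite (M ⧸ LinearMap.range f) ∧
      Nat.card (M ⧸ LinearMap.range f) ≤ Nat.card T := by
  have : Finite (O ⧸ Ideal.span {ϖ}) :=
    hϖ.maximalIdeal_eq ▸ ‹Finite (IsLocalRing.ResidueField O)›
  have : Finite (torsionBy O (K ⧸ range (Algebra.linearMap O K)) ϖ) :=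
    IsFractionRing.finite_torsionBy_quotient_range hϖ.ne_zero
  have : Finite (torsionBy O (Fin d → K ⧸ range (Algebra.linearMap O K)) ϖ) :=
    Pi.finite_torsionBy
  obtain ⟨n, hn⟩ := exists_pow_smul_eq_zero_of_finite (T := T) hϖ.not_isUnit
  exact finite_quotient_range_and_card_le
    (Pi.exists_smul_eq (IsFractionRing.exists_smul_eq_quotient_range hϖ.ne_zero))
    (Pi.exists_pow_smul_eq_zero (IsFractionRing.exists_pow_smul_eq_zero_quotient_range hϖ)) hn iso f

/-- Let `O` be a complete discrete valuation ring with uniformizer `ϖ` and fraction field `K`,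
and let `M` be a cofinitely generated `O`-module, i.e. `M ≅ (K⧸O)^d ⊕ T` with `d ≥ 0` and
`T` finite. Let `f : M → M` be an `O`-linear endomorphism with finite kernel. Then the
cokernel `M⧸f(M)` is finite, of cardinality at most `|T|`. -/
theorem stmt_2 (O : Type*) [CommRing O] [IsDomain O] [IsDiscreteValuationRing O]
    [IsAdicComplete (IsLocalRing.maximalIdeal O) O]
    [Finite (IsLocalRing.ResidueField O)]
    (ϖ : O) (hϖ : Irreducible ϖ)
    (K : Type*) [Field K] [Algebra O K] [IsFractionRing O K]
    (M : Type*) [AddCommGroup M] [Module O M]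
    (d : ℕ) (T : Type*) [AddCommGroup T] [Module O T] [Finite T]
    (iso : M ≃ₗ[O] (Fin d → K ⧸ LinearMap.range (Algebra.linearMap O K)) × T)
    (f : M →ₗ[O] M) (hker : Finite (LinearMap.ker f)) :
    Finite (M ⧸ LinearMap.range f) ∧
      Nat.card (M ⧸ LinearMap.range f) ≤ Nat.card T :=
  stmt_2_general O ϖ hϖ K M d T iso f hker
end

section
/- Let R be a commutative ring, S a commutative R-algebra, and F ∈ S an element that is not a zero divisor in S. Assume that S⧸FS is flat as an R-module. Then for every R-module A and every integer m ≥ 2, the sequence 0 → A ⊗_R S⧸F^{m-1}S → A ⊗_R S⧸F^{m}S → A ⊗_R S⧸FS → 0 is exact, where the first map is induced by multiplication by F (sending s mod F^{m-1} to Fs mod F^{m}) and the second map is induced by the canonical projection S⧸F^{m}S → S⧸FS. In particular, the map A ⊗_R S⧸F^{m-1}S → A ⊗_R S⧸F^{m}S induced by multiplication by F is injective. -/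
open TensorProduct

section

variable {R : Type*} [CommRing R] {S : Type*} [CommRing S] [Algebra R S]

/-- The `R`-submodule `F^k S` of `S`. -/
noncomputable def powSpan (F : S) (k : ℕ) : Submodule R S :=
  (Ideal.span {F ^ k}).restrictScalars R

/-- The map `S⧸F^(m-1)S → S⧸F^m S` induced by multiplication by `F`. -/
noncomputable def mulFMap (F : S) (m : ℕ) (hm : 2 ≤ m) :
    (S ⧸ (powSpan (R := R) F (m - 1))) →ₗ[R] S ⧸ (powSpan (R := R) F m) :=
  Submodule.mapQ (powSpan F (m - 1)) (powSpan F m) (LinearMap.mulLeft R F)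
    (by
      intro x hx
      simp only [powSpan, Submodule.restrictScalars_mem] at hx
      rw [Submodule.mem_comap]
      simp only [powSpan, Submodule.restrictScalars_mem, LinearMap.mulLeft_apply]
      obtain ⟨c, rfl⟩ := Ideal.mem_span_singleton'.mp hx
      refine Ideal.mem_span_singleton'.mpr ⟨c, ?_⟩
      have hpow : F ^ m = F ^ (m - 1) * F := by
        rw [← pow_succ, Nat.sub_add_cancel (by omega)]
      rw [hpow]; ring)

/-- The canonical projection `S⧸F^m S → S⧸FS`. -/
noncomputable def projFMap (F : S) (m : ℕ) (hm : 2 ≤ m) :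
    (S ⧸ (powSpan (R := R) F m)) →ₗ[R] S ⧸ (powSpan (R := R) F 1) :=
  Submodule.mapQ (powSpan F m) (powSpan F 1) LinearMap.id
    (by
      intro x hx
      simp only [powSpan, Submodule.restrictScalars_mem] at hx
      rw [Submodule.mem_comap]
      simp only [powSpan, Submodule.restrictScalars_mem, LinearMap.id_apply]
      exact Ideal.span_singleton_le_span_singleton.mpr
        (by rw [pow_one]; exact dvd_pow_self F (by omega)) hx)

end

/-- Diagram-chase step: given a presentation `K → G → A → 0` with `G` flat,
and a short exact sequence `0 → N → M → P → 0` with `P` flat, the map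
`A ⊗ N → A ⊗ M` is injective. -/
lemma chase_lTensor_injective {R : Type*} [CommRing R]
    {N M P : Type*} [AddCommGroup N] [Module R N] [AddCommGroup M] [Module R M]
    [AddCommGroup P] [Module R P] [Module.Flat R P]
    {A G K : Type*} [AddCommGroup A] [Module R A] [AddCommGroup G] [Module R G]
    [Module.Flat R G] [AddCommGroup K] [Module R K]
    (f : N →ₗ[R] M) (g : M →ₗ[R] P)
    (hf : Function.Injective f) (hfg : Function.Exact f g) (hg : Function.Surjective g)
    (ε : G →ₗ[R] A) (ι : K →ₗ[R] G)
    (hε : Function.Surjective ε) (hιinj : Function.Injective ι)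
    (hιε : Function.Exact ι ε) :
    Function.Injective (LinearMap.lTensor A f) := by
  rw [← LinearMap.ker_eq_bot, LinearMap.ker_eq_bot']
  intro x hx
  -- lift x to y : G ⊗ N
  obtain ⟨y, hy⟩ := LinearMap.rTensor_surjective N hε x
  -- first commuting square
  have sq1 : LinearMap.rTensor M ε ∘ₗ LinearMap.lTensor G f
      = LinearMap.lTensor A f ∘ₗ LinearMap.rTensor N ε := by
    rw [LinearMap.rTensor_comp_lTensor, LinearMap.lTensor_comp_rTensor]
  have hz : LinearMap.rTensor M ε (LinearMap.lTensor G f y) = 0 := by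
    have h := congrArg (fun (h : G ⊗[R] N →ₗ[R] A ⊗[R] M) => h y) sq1
    simp only [LinearMap.comp_apply] at h
    rw [h, hy, hx]
  -- exactness of the rTensor M row gives a preimage y' in K ⊗ M
  have hexrow : Function.Exact (LinearMap.rTensor M ι) (LinearMap.rTensor M ε) :=
    rTensor_exact (R := R) M hιε hε
  obtain ⟨y', hy'⟩ := (hexrow _).mp hz
  -- second commuting square
  have sq2 : LinearMap.rTensor P ι ∘ₗ LinearMap.lTensor K g
      = LinearMap.lTensor G g ∘ₗ LinearMap.rTensor M ι := by
    rw [LinearMap.rTensor_comp_lTensor, LinearMap.lTensor_comp_rTensor]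
  have hgf : LinearMap.lTensor G g ∘ₗ LinearMap.lTensor G f = 0 := by
    rw [← LinearMap.lTensor_comp, hfg.linearMap_comp_eq_zero, LinearMap.lTensor_zero]
  have h3 : LinearMap.rTensor P ι (LinearMap.lTensor K g y') = 0 := by
    have h := congrArg (fun (h : K ⊗[R] M →ₗ[R] G ⊗[R] P) => h y') sq2
    simp only [LinearMap.comp_apply] at h
    rw [h, hy']
    have h' := congrArg (fun (h : G ⊗[R] N →ₗ[R] G ⊗[R] P) => h y) hgf
    simpa using h'
  -- P flat: rTensor P ι injective, so lTensor K g y' = 0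
  have h4 : LinearMap.lTensor K g y' = 0 := by
    apply Module.Flat.rTensor_preserves_injective_linearMap ι hιinj
    simpa using h3
  -- exactness of the lTensor K row gives y'' in K ⊗ N
  have hexrow2 : Function.Exact (LinearMap.lTensor K f) (LinearMap.lTensor K g) :=
    lTensor_exact (R := R) K hfg hg
  obtain ⟨y'', hy''⟩ := (hexrow2 _).mp h4
  -- third commuting square
  have sq3 : LinearMap.rTensor M ι ∘ₗ LinearMap.lTensor K f
      = LinearMap.lTensor G f ∘ₗ LinearMap.rTensor N ι := by
    rw [LinearMap.rTensor_comp_lTensor, LinearMap.lTensor_comp_rTensor]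
  -- lTensor G f is injective since G is flat
  have hGinj : Function.Injective (LinearMap.lTensor G f) :=
    Module.Flat.lTensor_preserves_injective_linearMap f hf
  have h5 : y = LinearMap.rTensor N ι y'' := by
    apply hGinj
    have h := congrArg (fun (h : K ⊗[R] N →ₗ[R] G ⊗[R] M) => h y'') sq3
    simp only [LinearMap.comp_apply] at h
    rw [← h, hy'', hy']
  -- conclude: x = ε⊗N (ι⊗N y'') = (ε∘ι)⊗N y'' = 0
  have h6 : LinearMap.rTensor N ε ∘ₗ LinearMap.rTensor N ι = 0 := by
    rw [← LinearMap.rTensor_comp, hιε.linearMap_comp_eq_zero, LinearMap.rTensor_zero]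
  have h7 := congrArg (fun (h : K ⊗[R] N →ₗ[R] A ⊗[R] N) => h y'') h6
  simp only [LinearMap.comp_apply] at h7
  rw [← hy, h5]
  simpa using h7

set_option maxHeartbeats 1000000 in
/-- If `0 → N → M → P → 0` is exact with `P` flat, then tensoring with any module `A`
preserves injectivity of the first map. -/
lemma flat_coker_lTensor_injective {R : Type*} [CommRing R]
    {N M P : Type*} [AddCommGroup N] [Module R N] [AddCommGroup M] [Module R M]
    [AddCommGroup P] [Module R P] [Module.Flat R P]
    (A : Type*) [AddCommGroup A] [Module R A]
    (f : N →ₗ[R] M) (g : M →ₗ[R] P)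
    (hf : Function.Injective f) (hfg : Function.Exact f g) (hg : Function.Surjective g) :
    Function.Injective (LinearMap.lTensor A f) := by
  classical
  exact chase_lTensor_injective (G := A →₀ R)
    (K := LinearMap.ker (Finsupp.linearCombination R (_root_.id : A → A))) f g hf hfg hg
    (Finsupp.linearCombination R _root_.id)
    (LinearMap.ker (Finsupp.linearCombination R (_root_.id : A → A))).subtype
    (Finsupp.linearCombination_id_surjective R A)
    (Submodule.injective_subtype _)
    (LinearMap.exact_subtype_ker_map _)

section

variable {R : Type*} [CommRing R] {S : Type*} [CommRing S] [Algebra R S]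

lemma mulFMap_injective (F : S) (hF : F ∈ nonZeroDivisors S) (m : ℕ) (hm : 2 ≤ m) :
    Function.Injective (mulFMap (R := R) F m hm) := by
  rw [← LinearMap.ker_eq_bot, LinearMap.ker_eq_bot']
  intro x hx
  obtain ⟨s, rfl⟩ := Submodule.Quotient.mk_surjective _ x
  rw [mulFMap, Submodule.mapQ_apply, Submodule.Quotient.mk_eq_zero] at hx
  simp only [powSpan, Submodule.restrictScalars_mem, LinearMap.mulLeft_apply] at hx
  obtain ⟨c, hc⟩ := Ideal.mem_span_singleton'.mp hx
  rw [Submodule.Quotient.mk_eq_zero]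
  simp only [powSpan, Submodule.restrictScalars_mem]
  refine Ideal.mem_span_singleton'.mpr ⟨c, ?_⟩
  have hpow : F ^ m = F ^ (m - 1) * F := by
    rw [← pow_succ, Nat.sub_add_cancel (by omega)]
  rw [hpow, ← mul_assoc] at hc
  have h0 : (s - c * F ^ (m - 1)) * F = 0 := by
    rw [sub_mul, mul_comm s F, ← hc]
    ring
  have := hF.2 _ h0
  rw [sub_eq_zero] at this
  exact this.symm

lemma projFMap_surjective (F : S) (m : ℕ) (hm : 2 ≤ m) :
    Function.Surjective (projFMap (R := R) F m hm) := by
  intro x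
  obtain ⟨s, rfl⟩ := Submodule.Quotient.mk_surjective _ x
  exact ⟨Submodule.Quotient.mk s, by rw [projFMap, Submodule.mapQ_apply]; rfl⟩

lemma mulFMap_exact_projFMap (F : S) (m : ℕ) (hm : 2 ≤ m) :
    Function.Exact (mulFMap (R := R) F m hm) (projFMap (R := R) F m hm) := by
  intro x
  obtain ⟨s, rfl⟩ := Submodule.Quotient.mk_surjective _ x
  constructor
  · intro h
    rw [projFMap, Submodule.mapQ_apply, Submodule.Quotient.mk_eq_zero] at h
    simp only [LinearMap.id_apply, powSpan, Submodule.restrictScalars_mem] at h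
    obtain ⟨c, hc⟩ := Ideal.mem_span_singleton'.mp h
    rw [pow_one] at hc
    refine ⟨Submodule.Quotient.mk c, ?_⟩
    rw [mulFMap, Submodule.mapQ_apply]
    simp only [LinearMap.mulLeft_apply]
    rw [mul_comm, hc]
  · rintro ⟨t, ht⟩
    obtain ⟨u, rfl⟩ := Submodule.Quotient.mk_surjective _ t
    rw [← ht, mulFMap, projFMap, Submodule.mapQ_apply, Submodule.mapQ_apply,
      Submodule.Quotient.mk_eq_zero]
    simp only [LinearMap.mulLeft_apply, LinearMap.id_apply, powSpan,
      Submodule.restrictScalars_mem]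
    exact Ideal.mem_span_singleton'.mpr ⟨u, by rw [pow_one]; ring⟩

end

/-- Let `R` be a commutative ring, `S` a commutative `R`-algebra and `F ∈ S` a
non-zero-divisor such that `S⧸FS` is flat over `R`. Then for every `R`-module `A` and
every `m ≥ 2` the sequence
`0 → A ⊗ S⧸F^(m-1)S → A ⊗ S⧸F^m S → A ⊗ S⧸FS → 0`
(first map induced by multiplication by `F`, second by the projection) is exact. -/
theorem stmt_6 (R : Type*) [CommRing R] (S : Type*) [CommRing S] [Algebra R S]
    (F : S) (hF : F ∈ nonZeroDivisors S)
    (hflat : Module.Flat R (S ⧸ (powSpan (R := R) F 1)))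
    (A : Type*) [AddCommGroup A] [Module R A] (m : ℕ) (hm : 2 ≤ m) :
    Function.Injective
      (TensorProduct.map (LinearMap.id (R := R) (M := A)) (mulFMap F m hm)) ∧
    Function.Exact
      (TensorProduct.map (LinearMap.id (R := R) (M := A)) (mulFMap F m hm))
      (TensorProduct.map (LinearMap.id (R := R) (M := A)) (projFMap F m hm)) ∧
    Function.Surjective
      (TensorProduct.map (LinearMap.id (R := R) (M := A)) (projFMap F m hm)) := by
  have hinj := mulFMap_injective (R := R) F hF m hm
  have hsurj := projFMap_surjective (R := R) F m hm
  have hexact := mulFMap_exact_projFMap (R := R) F m hm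
  have e1 : TensorProduct.map (LinearMap.id (R := R) (M := A)) (mulFMap F m hm)
      = LinearMap.lTensor A (mulFMap (R := R) F m hm) := rfl
  have e2 : TensorProduct.map (LinearMap.id (R := R) (M := A)) (projFMap F m hm)
      = LinearMap.lTensor A (projFMap (R := R) F m hm) := rfl
  rw [e1, e2]
  refine ⟨?_, ?_, ?_⟩
  · exact flat_coker_lTensor_injective A (mulFMap (R := R) F m hm)
      (projFMap (R := R) F m hm) hinj hexact hsurj
  · exact lTensor_exact A hexact hsurj
  · exact LinearMap.lTensor_surjective A hsurj
end

section
/- Let O be a complete discrete valuation ring with maximal ideal 𝔪, and let F ∈ O[X] be a distinguished polynomial, i.e. F is monic and all of its coefficients other than the leading one lie in 𝔪. Then the natural O-algebra homomorphism O[X]⧸(F) → O⟦X⟧⧸(F) is an isomorphism; in particular, O⟦X⟧⧸(F) is a free O-module of rank deg F, with O-basis given by the images of 1, X, …, X^{deg F − 1}. -/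
/-!
Weierstrass division by a distinguished polynomial `F` over an adically complete ring writes every
power series uniquely as `q * F + r` with `r` a polynomial of degree `< deg F`; this is exactly the
statement that `O[X] ⧸ (F) → O⟦X⟧ ⧸ (F)` is bijective (`IsDistinguishedAt.algEquivQuotient`).
The basis is then the power basis `1, X, …, X^(deg F - 1)` of `AdjoinRoot F = O[X] ⧸ (F)`,
transported along this isomorphism.
-/

open Polynomial PowerSeries

namespace Polynomial.IsDistinguishedAt

variable {A : Type*} [CommRing A] {g : A[X]} {I : Ideal A} [IsAdicComplete I A]

noncomputable def powerSeriesQuotientBasis (H : g.IsDistinguishedAt I) :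
    Module.Basis (Fin g.natDegree) A (A⟦X⟧ ⧸ Ideal.span {(g : A⟦X⟧)}) :=
  (AdjoinRoot.powerBasisAux' H.monic).map H.algEquivQuotient.toLinearEquiv

theorem powerSeriesQuotientBasis_apply (H : g.IsDistinguishedAt I) (i : Fin g.natDegree) :
    H.powerSeriesQuotientBasis i = Ideal.Quotient.mk _ ((PowerSeries.X : A⟦X⟧) ^ (i : ℕ)) := by
  have h := (AdjoinRoot.powerBasis' H.monic).basis_eq_pow i
  rw [AdjoinRoot.powerBasis'_gen, ← AdjoinRoot.mk_X, ← map_pow] at h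
  calc H.powerSeriesQuotientBasis i = H.algEquivQuotient (AdjoinRoot.mk g (X ^ (i : ℕ))) :=
        congrArg H.algEquivQuotient h
    _ = Ideal.Quotient.mk _ ((X ^ (i : ℕ) : A[X]) : A⟦X⟧) := rfl
    _ = _ := by rw [Polynomial.coe_pow, Polynomial.coe_X]

end Polynomial.IsDistinguishedAt

/-- Let `O` be a complete discrete valuation ring with maximal ideal `𝔪` and let
`F ∈ O[X]` be a distinguished polynomial (monic, all non-leading coefficients in `𝔪`).
Then the natural `O`-algebra map `O[X]⧸(F) → O⟦X⟧⧸(F)` is an isomorphism; in particular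
`O⟦X⟧⧸(F)` is a free `O`-module of rank `deg F` with basis the images of
`1, X, …, X^(deg F − 1)`. -/
theorem stmt_8 (O : Type*) [CommRing O] [IsDomain O] [IsDiscreteValuationRing O]
    [IsAdicComplete (IsLocalRing.maximalIdeal O) O]
    (F : Polynomial O) (hmonic : F.Monic)
    (hdist : ∀ i < F.natDegree, F.coeff i ∈ IsLocalRing.maximalIdeal O) :
    Function.Bijective
      ((Ideal.quotientMap (I := Ideal.span {F}) (Ideal.span {(F : PowerSeries O)})
        (Polynomial.coeToPowerSeries.ringHom : O[X] →+* PowerSeries O)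
        (by
          rw [Ideal.span_le, Set.singleton_subset_iff]
          exact Ideal.mem_comap.mpr (by
            rw [Polynomial.coeToPowerSeries.ringHom_apply]
            exact Ideal.subset_span rfl))) :
        O[X] ⧸ Ideal.span {F} →+* PowerSeries O ⧸ Ideal.span {(F : PowerSeries O)}) ∧
    ∃ b : Module.Basis (Fin F.natDegree) O
        (PowerSeries O ⧸ Ideal.span {(F : PowerSeries O)}),
      ∀ i : Fin F.natDegree,
        b i = Ideal.Quotient.mk (Ideal.span {(F : PowerSeries O)})
          ((PowerSeries.X : PowerSeries O) ^ (i : ℕ)) := by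
  have H : F.IsDistinguishedAt (IsLocalRing.maximalIdeal O) := ⟨⟨hdist _⟩, hmonic⟩
  exact ⟨H.algEquivQuotient.bijective, H.powerSeriesQuotientBasis,
    H.powerSeriesQuotientBasis_apply⟩
end

section
/- Let λ : H → L and λ' : H' → L' be homomorphisms of abelian groups, set S = ker λ and S' = ker λ', and let h : H → H' and g : L → L' be homomorphisms satisfying λ' ∘ h = g ∘ λ, so that h restricts to a homomorphism r : S → S'. Suppose that h is surjective and that ker h and ker g are finite. Then ker r and coker r = S'⧸r(S) are finite, with |ker r| ≤ |ker h| and |coker r| ≤ |ker g|. -/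
/-- Quantitative snake-lemma consequence: let `λ : H → L`, `λ' : H' → L'` be homomorphisms
of abelian groups with kernels `S`, `S'`, and `h : H → H'`, `g : L → L'` with
`λ' ∘ h = g ∘ λ`, so that `h` restricts to `r : S → S'`. If `h` is surjective and
`ker h`, `ker g` are finite, then `ker r` and `coker r` are finite with
`|ker r| ≤ |ker h|` and `|coker r| ≤ |ker g|`. -/
theorem stmt_9 (H L H' L' : Type*) [AddCommGroup H] [AddCommGroup L]
    [AddCommGroup H'] [AddCommGroup L']
    (lam : H →+ L) (lam' : H' →+ L') (h : H →+ H') (g : L →+ L')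
    (hcomm : ∀ x : H, lam' (h x) = g (lam x))
    (r : lam.ker →+ lam'.ker) (hr : ∀ s : lam.ker, (r s : H') = h (s : H))
    (hsurj : Function.Surjective h)
    (hkerh : Finite h.ker) (hkerg : Finite g.ker) :
    Finite r.ker ∧ Finite (lam'.ker ⧸ r.range) ∧
      Nat.card r.ker ≤ Nat.card h.ker ∧
      Nat.card (lam'.ker ⧸ r.range) ≤ Nat.card g.ker := by
  -- part 1: ker r injects into ker h
  have hinj1 : ∃ f : r.ker → h.ker, Function.Injective f := by
    refine ⟨fun s => ⟨(s : lam.ker), ?_⟩, ?_⟩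
    · have h0 : r s = 0 := s.2
      have := hr (s : lam.ker)
      rw [h0] at this
      simpa using this.symm
    · intro a b hab
      have h2 : ((a : lam.ker) : H) = ((b : lam.ker) : H) := by simpa using hab
      exact Subtype.ext (Subtype.ext h2)
  obtain ⟨f1, hf1⟩ := hinj1
  have fin1 : Finite r.ker := Finite.of_injective f1 hf1
  have card1 : Nat.card r.ker ≤ Nat.card h.ker := Nat.card_le_card_of_injective f1 hf1
  -- part 2
  set K' : AddSubgroup L := h.ker.map lam with hK'
  set Q := L ⧸ K'
  set Ψ : H →+ Q := (QuotientAddGroup.mk' K').comp lam with hΨ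
  have hker_le : h.ker ≤ Ψ.ker := by
    intro x hx
    simp only [hΨ, AddMonoidHom.mem_ker, AddMonoidHom.comp_apply, QuotientAddGroup.mk'_apply]
    rw [QuotientAddGroup.eq_zero_iff]
    exact ⟨x, hx, rfl⟩
  set ΨQ : H ⧸ h.ker →+ Q := QuotientAddGroup.lift h.ker Ψ hker_le with hΨQ
  set e : H ⧸ h.ker ≃+ H' := QuotientAddGroup.quotientKerEquivOfSurjective h hsurj with he
  have he_mk : ∀ x : H, e (QuotientAddGroup.mk x) = h x := fun x => rfl
  set Φ : H' →+ Q := ΨQ.comp (e.symm : H' ≃+ H ⧸ h.ker).toAddMonoidHom with hΦ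
  have hΦ_h : ∀ x : H, Φ (h x) = QuotientAddGroup.mk (lam x) := by
    intro x
    have : e.symm (h x) = QuotientAddGroup.mk x := by
      apply e.injective; rw [AddEquiv.apply_symm_apply, he_mk]
    simp only [hΦ, AddMonoidHom.comp_apply, AddEquiv.coe_toAddMonoidHom, this]
    rfl
  set φ : lam'.ker →+ Q := Φ.comp lam'.ker.subtype with hφ
  -- kernel of φ is r.range
  have hker_eq : ∀ s' : lam'.ker, φ s' = 0 ↔ s' ∈ r.range := by
    intro s'
    constructor
    · intro h0
      obtain ⟨x, hx⟩ := hsurj (s' : H')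
      have : φ s' = QuotientAddGroup.mk (lam x) := by
        simp only [hφ, AddMonoidHom.comp_apply, AddSubgroup.coe_subtype, ← hx, hΦ_h]
      rw [this] at h0
      rw [QuotientAddGroup.eq_zero_iff] at h0
      obtain ⟨k, hk, hlk⟩ := h0
      have hmem : x - k ∈ lam.ker := by
        simp [AddMonoidHom.mem_ker, map_sub, hlk]
      refine ⟨⟨x - k, hmem⟩, ?_⟩
      apply Subtype.ext
      rw [hr ⟨x - k, hmem⟩]
      simp only [map_sub]
      rw [show h k = 0 from hk, sub_zero, hx]
    · rintro ⟨s, rfl⟩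
      have : ((r s : lam'.ker) : H') = h (s : H) := hr s
      have : φ (r s) = Φ (h (s : H)) := by
        simp only [hφ, AddMonoidHom.comp_apply, AddSubgroup.coe_subtype, this]
      rw [this, hΦ_h]
      rw [QuotientAddGroup.eq_zero_iff]
      have : lam (s : H) = 0 := s.2
      rw [this]
      exact zero_mem _
  -- lift φ to the quotient
  have hle : ∀ x ∈ r.range, φ x = 0 := fun x hx => (hker_eq x).2 hx
  set φbar : lam'.ker ⧸ r.range →+ Q := QuotientAddGroup.lift r.range φ hle with hφbar
  have hφbar_inj : Function.Injective φbar := by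
    rw [injective_iff_map_eq_zero]
    intro a ha
    obtain ⟨x, rfl⟩ := QuotientAddGroup.mk_surjective a
    have : φ x = 0 := ha
    rw [hker_eq] at this
    exact (QuotientAddGroup.eq_zero_iff x).2 this
  -- range of φbar lands in image of g.ker
  set ρ : g.ker →+ Q := (QuotientAddGroup.mk' K').comp g.ker.subtype with hρ
  have hrange : ∀ a : lam'.ker ⧸ r.range, φbar a ∈ Set.range ρ := by
    intro a
    obtain ⟨s', rfl⟩ := QuotientAddGroup.mk_surjective a
    obtain ⟨x, hx⟩ := hsurj (s' : H')
    have hmem : lam x ∈ g.ker := by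
      rw [AddMonoidHom.mem_ker, ← hcomm, hx]
      exact s'.2
    refine ⟨⟨lam x, hmem⟩, ?_⟩
    have : φbar (QuotientAddGroup.mk s') = φ s' := rfl
    rw [this]
    simp only [hφ, AddMonoidHom.comp_apply, AddSubgroup.coe_subtype, ← hx, hΦ_h]
    rfl
  -- build injection coker r → g.ker quotient image
  have fin_range : Finite (Set.range ρ) := Set.finite_range ρ
  set F : lam'.ker ⧸ r.range → Set.range ρ := fun a => ⟨φbar a, hrange a⟩ with hF
  have hFinj : Function.Injective F := by
    intro a b hab
    exact hφbar_inj (congrArg Subtype.val hab)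
  have fin2 : Finite (lam'.ker ⧸ r.range) := Finite.of_injective F hFinj
  have card2 : Nat.card (lam'.ker ⧸ r.range) ≤ Nat.card g.ker := by
    calc Nat.card (lam'.ker ⧸ r.range) ≤ Nat.card (Set.range ρ) :=
          Nat.card_le_card_of_injective F hFinj
      _ ≤ Nat.card g.ker := Nat.card_le_card_of_surjective
          (Set.rangeFactorization ρ) Set.rangeFactorization_surjective
  exact ⟨fin1, fin2, card1, card2⟩
end
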